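/- Let (M,F,g) be a foliated Riemannian manifold, f a smooth positive basic function, and let A^f denote the integrability tensor of F^⊥ with respect to the warped metric g_f, and S^f its second fundamental form with respect to g_f. Then for X, Y orthogonal to F: S^f(X,Y) = (1/f²) S(X,Y) (as F-valued tensors measured against g_f), and in particular F is Riemannian with respect to g if and only if it is Riemannian with respect to g_f. -/

import Mathlib

open scoped RealInnerProductSpace

/-- Abstract model of the smooth vector-field calculus of a foliated Riemannian
manifold `(M, 𝓕, g)`.  Here `C` plays the role of the algebra of smooth
functions on `M` and `V` that of the `C`-module of smooth vector fields.
`F` is the submodule of sections tangent to the foliation, `Fp` the submodule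
of sections orthogonal to it, `pt`/`pp` the corresponding projections,
`g` the Riemannian metric, `lie` the Lie bracket, `act` the action of a vector
field on a function (directional derivative) and `nabla` the Levi-Civita
connection of `g`. -/
structure FoliatedRiemann (C : Type*) (V : Type*) [CommRing C] [Algebra ℝ C]
    [AddCommGroup V] [Module C V] where
  g : V → V → C
  lie : V → V → V
  act : V → C → C
  nabla : V → V → V
  F : Submodule C V
  Fp : Submodule C V
  pt : V → V
  pp : V → V
  g_symm : ∀ v w, g v w = g w v
  g_addl : ∀ u v w, g (u + v) w = g u w + g v w
  g_smull : ∀ (c : C) (v w : V), g (c • v) w = c * g v w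
  g_nondeg : ∀ v, (∀ w, g v w = 0) → v = 0
  pt_mem : ∀ v, pt v ∈ F
  pp_mem : ∀ v, pp v ∈ Fp
  decomp : ∀ v, pt v + pp v = v
  pt_of_mem : ∀ v ∈ F, pt v = v
  pp_of_mem : ∀ v ∈ Fp, pp v = v
  orth : ∀ u x, u ∈ F → x ∈ Fp → g u x = 0
  full_orth : ∀ v, (∀ u ∈ F, g v u = 0) → v ∈ Fp
  torsion_free : ∀ v w, nabla v w - nabla w v = lie v w
  compat : ∀ e v w, act e (g v w) = g (nabla e v) w + g v (nabla e w)
  nabla_addl : ∀ u v w, nabla (u + v) w = nabla u w + nabla v w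
  nabla_smull : ∀ (c : C) (v w : V), nabla (c • v) w = c • nabla v w
  nabla_addr : ∀ u v w, nabla u (v + w) = nabla u v + nabla u w
  nabla_leibniz : ∀ (u : V) (c : C) (v : V), nabla u (c • v) = act u c • v + c • nabla u v
  act_add : ∀ (v : V) (a b : C), act v (a + b) = act v a + act v b
  act_mul : ∀ (v : V) (a b : C), act v (a * b) = act v a * b + a * act v b
  act_const : ∀ (v : V) (r : ℝ), act v (algebraMap ℝ C r) = 0

namespace FoliatedRiemann

variable {C V : Type*} [CommRing C] [Algebra ℝ C] [AddCommGroup V] [Module C V]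
variable (M : FoliatedRiemann C V)

/-- A basic function: constant along the leaves of the foliation. -/
def Basic (f : C) : Prop := ∀ u ∈ M.F, M.act u f = 0

/-- The warped metric `g_f`: equal to `f² g` on tangent components and to `g`
on orthogonal components. -/
def gf (f : C) (v w : V) : C := f ^ 2 * M.g (M.pt v) (M.pt w) + M.g (M.pp v) (M.pp w)

/-- The curvature tensor of a connection `n`. -/
def Rc (n : V → V → V) (x y z : V) : V := n x (n y z) - n y (n x z) - n (M.lie x y) z

/-- Lie derivative of a metric `h` in the direction `u`, evaluated on `x, y`. -/
def lieDer (h : V → V → C) (u x y : V) : C :=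
  M.act u (h x y) - h (M.lie u x) y - h x (M.lie u y)

/-- `n` is the Levi-Civita connection of the metric `h`: it is torsion free and
metric-compatible (which determines it uniquely, by the Koszul formula). -/
def IsLeviCivita (n : V → V → V) (h : V → V → C) : Prop :=
  (∀ v w, n v w - n w v = M.lie v w) ∧
  (∀ e v w, M.act e (h v w) = h (n e v) w + h v (n e w))

end FoliatedRiemann

/-!
For a Levi-Civita connection `n` of a metric `h`, the symmetrized Koszul formula expresses
`h(n_x y + n_y x, z)` through terms in which `h` always has `x` or `y` in one slot. For
`x, y ⊥ F` the warped metric agrees with `g` on all of them, so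
`f² g(S^f(x,y), u) = g_f(S^f(x,y), u) = g(S(x,y), u)` for `u ∈ F`, and nondegeneracy of `g`
on `F` gives `S^f = f⁻² S`. The Lie-derivative terms likewise only evaluate `g_f` with an
argument in `F^⊥`, where `g_f = g`.
-/

namespace FoliatedRiemann

variable {C V : Type*} [CommRing C] [Algebra ℝ C] [AddCommGroup V] [Module C V]
variable (M : FoliatedRiemann C V)

lemma g_zerol (w : V) : M.g 0 w = 0 := by
  simpa using M.g_smull 0 0 w

lemma g_zeror (v : V) : M.g v 0 = 0 := by
  rw [M.g_symm, M.g_zerol]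

lemma g_subl (u v w : V) : M.g (u - v) w = M.g u w - M.g v w := by
  rw [sub_eq_add_neg, M.g_addl, ← neg_one_smul C v, M.g_smull, neg_one_mul, ← sub_eq_add_neg]

lemma g_addr (u v w : V) : M.g u (v + w) = M.g u v + M.g u w := by
  rw [M.g_symm, M.g_addl, M.g_symm v, M.g_symm w]

lemma g_subr (u v w : V) : M.g u (v - w) = M.g u v - M.g u w := by
  rw [M.g_symm, M.g_subl, M.g_symm v, M.g_symm w]

lemma eq_zero_of_mem_F_of_mem_Fp {v : V} (hF : v ∈ M.F) (hFp : v ∈ M.Fp) : v = 0 := by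
  refine M.g_nondeg v fun w => ?_
  rw [← M.decomp w, M.g_addr, M.g_symm v, M.orth _ _ (M.pt_mem w) hFp,
    M.orth _ _ hF (M.pp_mem w), add_zero]

lemma ext_of_mem_F {a b : V} (ha : a ∈ M.F) (hb : b ∈ M.F)
    (h : ∀ u ∈ M.F, M.g a u = M.g b u) : a = b := by
  have hFp : a - b ∈ M.Fp := M.full_orth _ fun u hu => by rw [M.g_subl, h u hu, sub_self]
  exact sub_eq_zero.mp (M.eq_zero_of_mem_F_of_mem_Fp (sub_mem ha hb) hFp)

section Projections

variable {M} {a b v : V}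

lemma pt_eq_of_add_eq (ha : a ∈ M.F) (hb : b ∈ M.Fp) (h : a + b = v) : M.pt v = a := by
  have hswap : M.pt v - a = b - M.pp v := by
    rw [sub_eq_sub_iff_add_eq_add, M.decomp, ← h, add_comm]
  exact sub_eq_zero.mp <| M.eq_zero_of_mem_F_of_mem_Fp (sub_mem (M.pt_mem v) ha)
    (hswap ▸ sub_mem hb (M.pp_mem v))

lemma pp_eq_of_add_eq (ha : a ∈ M.F) (hb : b ∈ M.Fp) (h : a + b = v) : M.pp v = b := by
  have hv := M.decomp v
  rw [pt_eq_of_add_eq ha hb h] at hv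
  exact add_left_cancel (hv.trans h.symm)

lemma pt_of_mem_Fp (hv : v ∈ M.Fp) : M.pt v = 0 :=
  pt_eq_of_add_eq (zero_mem _) hv (zero_add v)

lemma pp_of_mem_F (hv : v ∈ M.F) : M.pp v = 0 :=
  pp_eq_of_add_eq hv (zero_mem _) (add_zero v)

lemma pt_sub (v w : V) : M.pt (v - w) = M.pt v - M.pt w :=
  pt_eq_of_add_eq (sub_mem (M.pt_mem v) (M.pt_mem w)) (sub_mem (M.pp_mem v) (M.pp_mem w))
    (by rw [sub_add_sub_comm, M.decomp, M.decomp])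

lemma pp_sub (v w : V) : M.pp (v - w) = M.pp v - M.pp w :=
  pp_eq_of_add_eq (sub_mem (M.pt_mem v) (M.pt_mem w)) (sub_mem (M.pp_mem v) (M.pp_mem w))
    (by rw [sub_add_sub_comm, M.decomp, M.decomp])

lemma g_pt_left {u : V} (hu : u ∈ M.F) (v : V) : M.g (M.pt v) u = M.g v u := by
  conv_rhs => rw [← M.decomp v]
  rw [M.g_addl, M.g_symm (M.pp v), M.orth u _ hu (M.pp_mem v), add_zero]

lemma g_pp_right {y : V} (hy : y ∈ M.Fp) (w : V) : M.g y (M.pp w) = M.g y w := by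
  conv_rhs => rw [← M.decomp w]
  rw [M.g_addr, M.g_symm y (M.pt w), M.orth _ _ (M.pt_mem w) hy, zero_add]

end Projections

section Warped

variable (f : C)

lemma gf_symm (v w : V) : M.gf f v w = M.gf f w v := by
  rw [gf, gf, M.g_symm (M.pt v), M.g_symm (M.pp v)]

lemma gf_subr (u v w : V) : M.gf f u (v - w) = M.gf f u v - M.gf f u w := by
  simp only [gf, pt_sub, pp_sub, M.g_subr]
  ring

lemma gf_of_mem_F_right {u : V} (hu : u ∈ M.F) (v : V) : M.gf f v u = f ^ 2 * M.g v u := by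
  rw [gf, M.pt_of_mem u hu, pp_of_mem_F hu, M.g_zeror, add_zero, g_pt_left hu]

lemma gf_of_mem_Fp_left {y : V} (hy : y ∈ M.Fp) (w : V) : M.gf f y w = M.g y w := by
  rw [gf, pt_of_mem_Fp hy, M.pp_of_mem y hy, M.g_zerol, mul_zero, zero_add, g_pp_right hy]

lemma lieDer_gf_of_mem_Fp {x y : V} (hx : x ∈ M.Fp) (hy : y ∈ M.Fp) (u : V) :
    M.lieDer (M.gf f) u x y = M.lieDer M.g u x y := by
  rw [lieDer, lieDer, M.gf_symm f (M.lie u x), M.gf_of_mem_Fp_left f hx,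
    M.gf_of_mem_Fp_left f hy, M.gf_of_mem_Fp_left f hx, M.g_symm y]

end Warped

/-- Right-hand side of the Koszul formula for `h(n_x y + n_y x, z)`. -/
def symmKoszul (h : V → V → C) (x y z : V) : C :=
  M.act x (h y z) + M.act y (h x z) - M.act z (h x y) - h y (M.lie x z) - h x (M.lie y z)

lemma isLeviCivita_nabla : M.IsLeviCivita M.nabla M.g :=
  ⟨M.torsion_free, M.compat⟩

lemma IsLeviCivita.add_swap_eq_symmKoszul {M : FoliatedRiemann C V} {n : V → V → V}
    {h : V → V → C} (hn : M.IsLeviCivita n h) (hsymm : ∀ v w, h v w = h w v)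
    (hsubr : ∀ u v w, h u (v - w) = h u v - h u w) (x y z : V) :
    h (n x y) z + h (n y x) z = M.symmKoszul h x y z := by
  obtain ⟨htf, hcompat⟩ := hn
  rw [symmKoszul, hcompat x y z, hcompat y x z, hcompat z x y, hsymm (n z x) y,
    ← htf x z, ← htf y z, hsubr, hsubr]
  ring

lemma symmKoszul_gf_of_mem_Fp (f : C) {x y : V} (hx : x ∈ M.Fp) (hy : y ∈ M.Fp) (z : V) :
    M.symmKoszul (M.gf f) x y z = M.symmKoszul M.g x y z := by
  simp only [symmKoszul, M.gf_of_mem_Fp_left f hx, M.gf_of_mem_Fp_left f hy]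

end FoliatedRiemann

theorem warped_second_fundamental_form_of_orthogonal_distribution_general
    {C V : Type*} [CommRing C] [Algebra ℝ C]
    [AddCommGroup V] [Module C V]
    (M : FoliatedRiemann C V) (f finv : C) (hfinv : f * finv = 1)
    (nf S Sf : V → V → V)
    (hnf : M.IsLeviCivita nf (M.gf f))
    (hSval : ∀ x y, x ∈ M.Fp → y ∈ M.Fp → S x y ∈ M.F)
    (hSdef : ∀ x y, x ∈ M.Fp → y ∈ M.Fp → ∀ u ∈ M.F,
      M.g (S x y) u = (1/2 : ℝ) • (M.g (M.nabla x y) u + M.g (M.nabla y x) u))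
    (hSfval : ∀ x y, x ∈ M.Fp → y ∈ M.Fp → Sf x y ∈ M.F)
    (hSfdef : ∀ x y, x ∈ M.Fp → y ∈ M.Fp → ∀ u ∈ M.F,
      M.gf f (Sf x y) u = (1/2 : ℝ) • (M.gf f (nf x y) u + M.gf f (nf y x) u)) :
    (∀ x y, x ∈ M.Fp → y ∈ M.Fp → Sf x y = finv ^ 2 • S x y) ∧
    ((∀ u ∈ M.F, ∀ x ∈ M.Fp, ∀ y ∈ M.Fp, M.lieDer M.g u x y = 0) ↔
     (∀ u ∈ M.F, ∀ x ∈ M.Fp, ∀ y ∈ M.Fp, M.lieDer (M.gf f) u x y = 0)) := by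
  have hscaled : ∀ x y, x ∈ M.Fp → y ∈ M.Fp → ∀ u ∈ M.F,
      f ^ 2 * M.g (Sf x y) u = M.g (S x y) u := by
    intro x y hx hy u hu
    calc f ^ 2 * M.g (Sf x y) u = M.gf f (Sf x y) u := (M.gf_of_mem_F_right f hu _).symm
      _ = (1/2 : ℝ) • M.symmKoszul (M.gf f) x y u := by
        rw [hSfdef x y hx hy u hu, hnf.add_swap_eq_symmKoszul (M.gf_symm f) (M.gf_subr f)]
      _ = (1/2 : ℝ) • M.symmKoszul M.g x y u := by rw [M.symmKoszul_gf_of_mem_Fp f hx hy]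
      _ = M.g (S x y) u := by
        rw [hSdef x y hx hy u hu, M.isLeviCivita_nabla.add_swap_eq_symmKoszul M.g_symm M.g_subr]
  refine ⟨fun x y hx hy => M.ext_of_mem_F (hSfval x y hx hy)
    (Submodule.smul_mem _ _ (hSval x y hx hy)) fun u hu => ?_, ?_⟩
  · rw [M.g_smull, ← hscaled x y hx hy u hu, ← mul_assoc, ← mul_pow, mul_comm finv, hfinv,
      one_pow, one_mul]
  · exact forall₂_congr fun u _ => forall₂_congr fun x hx => forall₂_congr fun y hy => by
      rw [M.lieDer_gf_of_mem_Fp f hx hy]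

/-- the second fundamental form of `F^⊥` with respect to the
warped metric satisfies `S^f(X,Y) = (1/f²) S(X,Y)`; in particular `F` is
Riemannian with respect to `g` iff it is Riemannian with respect to `g_f`. -/
theorem warped_second_fundamental_form_of_orthogonal_distribution
    {C V : Type*} [CommRing C] [PartialOrder C] [Algebra ℝ C]
    [AddCommGroup V] [Module C V]
    (M : FoliatedRiemann C V) (f finv : C) (hfpos : 0 < f) (hfinv : f * finv = 1)
    (hbasic : M.Basic f)
    (nf S Sf : V → V → V)
    (hnf : M.IsLeviCivita nf (M.gf f))
    (hSval : ∀ x y, x ∈ M.Fp → y ∈ M.Fp → S x y ∈ M.F)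
    (hSdef : ∀ x y, x ∈ M.Fp → y ∈ M.Fp → ∀ u ∈ M.F,
      M.g (S x y) u = (1/2 : ℝ) • (M.g (M.nabla x y) u + M.g (M.nabla y x) u))
    (hSfval : ∀ x y, x ∈ M.Fp → y ∈ M.Fp → Sf x y ∈ M.F)
    (hSfdef : ∀ x y, x ∈ M.Fp → y ∈ M.Fp → ∀ u ∈ M.F,
      M.gf f (Sf x y) u = (1/2 : ℝ) • (M.gf f (nf x y) u + M.gf f (nf y x) u)) :
    (∀ x y, x ∈ M.Fp → y ∈ M.Fp → Sf x y = finv ^ 2 • S x y) ∧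
    ((∀ u ∈ M.F, ∀ x ∈ M.Fp, ∀ y ∈ M.Fp, M.lieDer M.g u x y = 0) ↔
     (∀ u ∈ M.F, ∀ x ∈ M.Fp, ∀ y ∈ M.Fp, M.lieDer (M.gf f) u x y = 0)) :=
  warped_second_fundamental_form_of_orthogonal_distribution_general M f finv hfinv nf S Sf hnf hSval
    hSdef hSfval hSfdef
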